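/- arXiv:2601.06546 — 2 statements merged into one kernel-verified Lean document; each statement's English description precedes it below -/
import Mathlib

section
/- Let q be a prime power, let Δ be a simplicial complex on vertex set {1,…,ℓ} containing every singleton, and let G be its underlying graph (the simple graph on {1,…,ℓ} whose edges are the 2-element faces of Δ). Then for every nonnegative integer k, the integer χ(S_Δ^q, q^k) is divisible by (q−1)^ℓ, and the quotient χ(S_Δ^q, q^k)/(q−1)^ℓ is congruent to P(G,k) modulo q−1. -/
open Finset
open scoped Classical

/-- The characteristic polynomial of a finite set of (hyper)planes, evaluated at an
integer `t`:  `χ(A,t) = Σ_{I ⊆ A} (−1)^{|I|} t^{dim ∩_{H ∈ I} H}`, the empty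
intersection being the whole space. -/
noncomputable def chi {K V : Type} [Field K] [Fintype V]
    (A : Finset (Submodule K (V → K))) (t : ℤ) : ℤ :=
  ∑ I ∈ A.powerset, (-1) ^ I.card * t ^ (Module.finrank K ↥(I.inf id))
/-- The kernel of the linear form `x ↦ ∑ i, a i * x i`. -/
noncomputable def kerForm {K V : Type} [Field K] [Fintype V] (a : V → K) :
    Submodule K (V → K) :=
  LinearMap.ker (∑ i, a i • (LinearMap.proj i : (V → K) →ₗ[K] K))

/-- The arrangement `S_Δ^q` attached to a simplicial complex with face set `𝓕`:
all hyperplanes `ker (a_{i₁} x_{i₁} + ⋯ + a_{i_r} x_{i_r})` where `{i₁, …, i_r}`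
runs over the nonempty faces and the `a`'s run over the nonzero field elements. -/
noncomputable def SArr (K : Type) [Field K] [Fintype K] {V : Type} [Fintype V]
    (𝓕 : Finset (Finset V)) : Finset (Submodule K (V → K)) :=
  (𝓕.filter fun s => s.Nonempty).biUnion fun s =>
    ((Finset.univ : Finset (V → K)).filter
      (fun a => ∀ i, (i ∈ s → a i ≠ 0) ∧ (i ∉ s → a i = 0))).image kerForm
/-- `nColorings G k` is the number of proper `k`-colorings of the graph `G`. -/
noncomputable def nColorings {V : Type} (G : SimpleGraph V) (k : ℕ) : ℕ :=
  Nat.card {f : V → Fin k // ∀ u w, G.Adj u w → f u ≠ f w}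

/-!
Evaluating `χ` at `q^k` counts the `k`-tuples of points of `F^ℓ` lying together on no
hyperplane (the finite field method). Transposed, such a tuple is a matrix `y : ℓ × k` whose
rows satisfy no linear relation supported on a face; in particular no row vanishes. Matrices with
a single nonzero entry per row are exactly `(F^×)^ℓ × {proper k-colourings of G}`. The torus
`(F^×)^ℓ × (F^×)^k` rescales rows and columns of the remaining matrices; each of them has a row
with nonzero entries in two columns `j₀ ≠ j₁`, so its stabiliser injects into `(F^×)^(k-1)` and
its orbit has size divisible by `(q-1)^(ℓ+1)`.
-/

section FiniteFieldMethod

variable {K V : Type} [Field K] [Fintype K] [Fintype V]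

lemma card_forall_mem_submodule (W : Submodule K (V → K)) (k : ℕ) :
    #{x : Fin k → V → K | ∀ j, x j ∈ W} = Fintype.card K ^ (k * Module.finrank K W) := by
  rw [← Fintype.card_subtype, Fintype.card_congr Equiv.subtypePiEquivPi, Fintype.card_pi,
    prod_const, card_univ, Fintype.card_fin, pow_mul', ← Module.card_eq_pow_finrank (K := K)]

theorem chi_card_pow_eq_card (A : Finset (Submodule K (V → K))) (k : ℕ) :
    chi A ((Fintype.card K : ℤ) ^ k) = #{x : Fin k → V → K | ∀ H ∈ A, ∃ j, x j ∉ H} := by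
  let S (H : Submodule K (V → K)) : Finset (Fin k → V → K) := {x | ∀ j, x j ∈ H}
  have hinf (I : Finset (Submodule K (V → K))) :
      I.inf S = ({x | ∀ j, x j ∈ I.inf id} : Finset (Fin k → V → K)) := by
    ext x
    simp [S, Finset.mem_inf, Submodule.mem_finsetInf, forall_comm (α := Fin k)]
  have hcompl : A.inf (fun H ↦ (S H)ᶜ) =
      ({x | ∀ H ∈ A, ∃ j, x j ∉ H} : Finset (Fin k → V → K)) := by
    ext x
    simp [S, Finset.mem_inf]
  rw [← hcompl, inclusion_exclusion_card_inf_compl, chi]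
  refine sum_congr rfl fun I _ ↦ ?_
  rw [hinf, card_forall_mem_submodule, ← pow_mul]
  norm_cast

end FiniteFieldMethod

lemma Subgroup.dvd_index_of_injective {G H : Type*} [Group G] [Finite G] [Group H]
    (S : Subgroup G) (φ : S →* H) (hφ : Function.Injective φ) {n : ℕ}
    (hG : Nat.card G = n * Nat.card H) : n ∣ S.index := by
  obtain ⟨t, ht⟩ := Subgroup.card_dvd_of_injective φ hφ
  refine ⟨t, Nat.eq_of_mul_eq_mul_right (Nat.card_pos (α := S)) ?_⟩
  rw [S.index_mul_card, hG, ht]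
  ring

lemma MulAction.dvd_card_of_forall_dvd_index_stabilizer {G α : Type*} [Group G] [MulAction G α]
    [Finite α] {n : ℕ} (h : ∀ a : α, n ∣ (stabilizer G a).index) : n ∣ Nat.card α := by
  let := Fintype.ofFinite (orbitRel.Quotient G α)
  have (a : α) : Finite (G ⧸ stabilizer G a) := .of_equiv _ (orbitEquivQuotientStabilizer G a)
  rw [Nat.card_congr (selfEquivSigmaOrbitsQuotientStabilizer G α), Nat.card_sigma]
  exact dvd_sum fun ω _ ↦ h ω.out

section Arrangement

variable {F V : Type} [Field F] [Fintype V] {k : ℕ} {𝓕 : Finset (Finset V)}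

lemma mem_SArr [Fintype F] {H : Submodule F (V → F)} :
    H ∈ SArr F 𝓕 ↔
      ∃ s ∈ 𝓕, s.Nonempty ∧ ∃ a : V → F, (∀ i, a i ≠ 0 ↔ i ∈ s) ∧ kerForm a = H := by
  have hsupp (s : Finset V) (a : V → F) :
      (∀ i, (i ∈ s → a i ≠ 0) ∧ (i ∉ s → a i = 0)) ↔ ∀ i, a i ≠ 0 ↔ i ∈ s :=
    forall_congr' fun i ↦ by tauto
  simp only [SArr, mem_biUnion, mem_filter, mem_image, mem_univ, true_and, hsupp, and_assoc]

lemma exists_not_mem_kerForm_iff {a : V → F} {x : Fin k → V → F} :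
    (∃ j, x j ∉ kerForm a) ↔ ∑ i, a i • Function.swap x i ≠ 0 := by
  simp [kerForm, Function.ne_iff, Finset.sum_apply, Function.swap]

/-- The columns of `y` form a `k`-tuple of points of `F^V` lying together on no hyperplane of
`SArr F 𝓕`. -/
def IsGood (𝓕 : Finset (Finset V)) (y : V → Fin k → F) : Prop :=
  ∀ s ∈ 𝓕, s.Nonempty → ∀ a : V → F, (∀ i, a i ≠ 0 ↔ i ∈ s) → ∑ i, a i • y i ≠ 0

theorem chi_SArr_eq_card_isGood [Fintype F] (𝓕 : Finset (Finset V)) (k : ℕ) :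
    chi (SArr F 𝓕) ((Fintype.card F : ℤ) ^ k) =
      Nat.card {y : V → Fin k → F // IsGood 𝓕 y} := by
  rw [chi_card_pow_eq_card, ← Fintype.card_subtype, ← Nat.card_eq_fintype_card]
  refine congrArg _ (Nat.card_congr ((Equiv.piComm _).subtypeEquiv fun x ↦ ?_))
  constructor
  · intro h s hs hne a ha
    exact exists_not_mem_kerForm_iff.mp (h _ (mem_SArr.mpr ⟨s, hs, hne, a, ha, rfl⟩))
  · rintro h H hH
    obtain ⟨s, hs, hne, a, ha, rfl⟩ := mem_SArr.mp hH
    exact exists_not_mem_kerForm_iff.mpr (h s hs hne a ha)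

lemma IsGood.ne_zero {y : V → Fin k → F} (hy : IsGood 𝓕 y) (hsingle : ∀ i : V, {i} ∈ 𝓕)
    (i : V) : y i ≠ 0 := by
  simpa [Pi.single_apply] using
    hy {i} (hsingle i) (singleton_nonempty i) (Pi.single i 1) (by simp [Pi.single_apply])

lemma IsGood.rescale {y : V → Fin k → F} (hy : IsGood 𝓕 y) (c : V → Fˣ) (d : Fin k → Fˣ) :
    IsGood 𝓕 (fun i j ↦ (c i : F) * ((d j : F) * y i j)) := by
  intro s hs hne a ha hsum
  refine hy s hs hne (fun i ↦ a i * c i) (fun i ↦ by simpa using ha i) (funext fun j ↦ ?_)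
  have hj := congrFun hsum j
  simp only [Finset.sum_apply, Pi.smul_apply, smul_eq_mul, Pi.zero_apply] at hj ⊢
  have hdj : (d j : F) * ∑ i, a i * c i * y i j = 0 := by
    rw [← hj, mul_sum]
    exact sum_congr rfl fun i _ ↦ by ring
  exact (mul_eq_zero.mp hdj).resolve_left (d j).ne_zero

end Arrangement

section Simple

variable {F V : Type} [Field F] {k : ℕ} {𝓕 : Finset (Finset V)}

def IsSimple (y : V → Fin k → F) : Prop :=
  ∀ i, (Function.support (y i)).Subsingleton

lemma isSimple_rescale_iff (c : V → Fˣ) (d : Fin k → Fˣ) (y : V → Fin k → F) :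
    IsSimple (fun i j ↦ (c i : F) * ((d j : F) * y i j)) ↔ IsSimple y := by
  have (i : V) : Function.support (fun j ↦ (c i : F) * ((d j : F) * y i j)) =
      Function.support (y i) := by
    ext j
    simp
  simp only [IsSimple, this]

def singleRows (p : V → Fin k × Fˣ) : V → Fin k → F :=
  fun i ↦ Pi.single (p i).1 ((p i).2 : F)

lemma singleRows_injective :
    Function.Injective (singleRows : (V → Fin k × Fˣ) → V → Fin k → F) := by
  intro p p' h
  funext i
  have hi := congrFun h i
  simp only [singleRows] at hi
  have hj : (p i).1 = (p' i).1 := by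
    by_contra hne
    simpa [Pi.single_apply, hne] using congrFun hi (p i).1
  rw [hj] at hi
  exact Prod.ext hj (Units.ext (Pi.single_injective _ hi))

lemma isSimple_singleRows (p : V → Fin k × Fˣ) : IsSimple (singleRows (F := F) p) :=
  fun _ ↦ Set.subsingleton_singleton.anti Pi.support_single_subset

lemma exists_singleRows_eq {y : V → Fin k → F} (hy : IsSimple y) (h0 : ∀ i, y i ≠ 0) :
    ∃ p, singleRows p = y := by
  have (i : V) : ∃ q : Fin k × Fˣ, Pi.single q.1 (q.2 : F) = y i := by
    obtain ⟨j, hj⟩ := Function.ne_iff.mp (h0 i)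
    refine ⟨(j, Units.mk0 _ hj), funext fun j' ↦ ?_⟩
    by_cases hj' : j' = j
    · simp [hj']
    · rw [Pi.single_eq_of_ne hj']
      by_contra h
      exact hj' (hy i (Ne.symm h) hj)
  choose p hp using this
  exact ⟨p, funext hp⟩

variable [DecidableEq V] {G : SimpleGraph V}

lemma adj_of_mem_face (hG : ∀ i j, G.Adj i j ↔ i ≠ j ∧ ({i, j} : Finset V) ∈ 𝓕)
    (hdown : ∀ s ∈ 𝓕, ∀ t ⊆ s, t ∈ 𝓕) {s : Finset V} (hs : s ∈ 𝓕)
    {u w : V} (hu : u ∈ s) (hw : w ∈ s) (hne : u ≠ w) : G.Adj u w :=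
  (hG u w).mpr ⟨hne, hdown s hs _ (by simp [insert_subset_iff, hu, hw])⟩

lemma isGood_singleRows_iff [Fintype V]
    (hG : ∀ i j, G.Adj i j ↔ i ≠ j ∧ ({i, j} : Finset V) ∈ 𝓕)
    (hdown : ∀ s ∈ 𝓕, ∀ t ⊆ s, t ∈ 𝓕) (p : V → Fin k × Fˣ) :
    IsGood 𝓕 (singleRows (F := F) p) ↔ ∀ u w, G.Adj u w → (p u).1 ≠ (p w).1 := by
  constructor
  · -- two adjacent rows `c_u e_j` and `c_w e_j` satisfy `c_w · (c_u e_j) - c_u · (c_w e_j) = 0`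
    intro hp u w huw hc
    obtain ⟨hne, hface⟩ := (hG u w).mp huw
    refine hp _ hface (insert_nonempty _ _)
      (Pi.single u ((p w).2 : F) - Pi.single w ((p u).2 : F)) (fun i ↦ ?_) ?_
    · by_cases hiu : i = u
      · simp [hiu, hne]
      · by_cases hiw : i = w <;> simp [hiu, hiw, hne]
    · simp only [Pi.sub_apply, sub_smul, ite_smul, zero_smul, Pi.single_apply, sum_sub_distrib,
        sum_ite_eq', mem_univ, if_true, singleRows, hc]
      rw [← Pi.single_smul', ← Pi.single_smul', smul_eq_mul, smul_eq_mul, mul_comm, sub_self]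
  · -- a face is a clique, so row `i₀` is its only row with a nonzero entry in column `p i₀`
    rintro hp s hs ⟨i₀, hi₀⟩ a ha hsum
    have hcol := congrFun hsum (p i₀).1
    simp only [Finset.sum_apply, Pi.smul_apply, smul_eq_mul, singleRows, Pi.zero_apply] at hcol
    rw [sum_eq_single i₀] at hcol
    · simp only [Pi.single_eq_same] at hcol
      exact mul_ne_zero ((ha i₀).mpr hi₀) (p i₀).2.ne_zero hcol
    · intro i _ hi
      by_cases his : i ∈ s
      · rw [Pi.single_eq_of_ne (hp _ _ (adj_of_mem_face hG hdown hs hi₀ his (Ne.symm hi))),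
          mul_zero]
      · rw [not_ne_iff.mp (mt (ha i).mp his), zero_mul]
    · simp

theorem card_isGood_isSimple [Fintype F] [Fintype V]
    (hG : ∀ i j, G.Adj i j ↔ i ≠ j ∧ ({i, j} : Finset V) ∈ 𝓕)
    (hdown : ∀ s ∈ 𝓕, ∀ t ⊆ s, t ∈ 𝓕) (hsingle : ∀ i : V, {i} ∈ 𝓕) :
    Nat.card {y : V → Fin k → F // IsGood 𝓕 y ∧ IsSimple y} =
      (Fintype.card F - 1) ^ Fintype.card V * nColorings G k := by
  let e : {p : V → Fin k × Fˣ // IsGood 𝓕 (singleRows p)} ≃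
      {y : V → Fin k → F // IsGood 𝓕 y ∧ IsSimple y} :=
    Equiv.ofBijective (fun p ↦ ⟨singleRows p.1, p.2, isSimple_singleRows _⟩)
      ⟨fun p p' h ↦ Subtype.ext (singleRows_injective (congrArg Subtype.val h)),
        fun ⟨y, hgood, hsimple⟩ ↦
          let ⟨p, hp⟩ := exists_singleRows_eq hsimple (hgood.ne_zero hsingle)
          ⟨⟨p, hp ▸ hgood⟩, Subtype.ext hp⟩⟩
  let IsProper (f : V → Fin k) : Prop := ∀ u w, G.Adj u w → f u ≠ f w
  let e' : {p : V → Fin k × Fˣ // IsGood 𝓕 (singleRows p)} ≃ {f // IsProper f} × (V → Fˣ) :=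
    (Equiv.subtypeEquivRight (isGood_singleRows_iff hG hdown)).trans
      (((Equiv.arrowProdEquivProdArrow V (fun _ ↦ Fin k) (fun _ ↦ Fˣ)).subtypeEquiv
        (q := fun fc ↦ IsProper fc.1) fun _ ↦ Iff.rfl).trans
        Equiv.prodSubtypeFstEquivSubtypeProd)
  rw [← Nat.card_congr e, Nat.card_congr e', Nat.card_prod, nColorings, mul_comm,
    Nat.card_eq_fintype_card (α := V → Fˣ), Fintype.card_fun, Fintype.card_units]

end Simple

section TorusAction

variable {F V : Type} [Field F] [Fintype V] {k : ℕ} {𝓕 : Finset (Finset V)}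

variable (F k 𝓕) in
def GoodNonsimple : Type := {y : V → Fin k → F // IsGood 𝓕 y ∧ ¬ IsSimple y}

instance [Finite F] : Finite (GoodNonsimple F k 𝓕) := Subtype.finite

instance : MulAction ((V → Fˣ) × (Fin k → Fˣ)) (GoodNonsimple F k 𝓕) where
  smul g y := ⟨fun i j ↦ (g.1 i : F) * ((g.2 j : F) * y.1 i j), y.2.1.rescale g.1 g.2,
    (isSimple_rescale_iff g.1 g.2 y.1).not.mpr y.2.2⟩
  one_smul y := Subtype.ext <| funext fun i ↦ funext fun j ↦ by
    show ((1 : V → Fˣ) i : F) * (((1 : Fin k → Fˣ) j : F) * y.1 i j) = y.1 i j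
    simp
  mul_smul g h y := Subtype.ext <| funext fun i ↦ funext fun j ↦ by
    show ((g.1 * h.1) i : F) * (((g.2 * h.2) j : F) * y.1 i j) =
      (g.1 i : F) * ((g.2 j : F) * ((h.1 i : F) * ((h.2 j : F) * y.1 i j)))
    simp only [Pi.mul_apply, Units.val_mul]
    ring

lemma mul_eq_one_of_mem_stabilizer {y : GoodNonsimple F k 𝓕} {g : (V → Fˣ) × (Fin k → Fˣ)}
    (hg : g ∈ MulAction.stabilizer _ y) {i : V} {j : Fin k} (hij : y.1 i j ≠ 0) :
    g.1 i * g.2 j = 1 := by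
  have hfix : (g.1 i : F) * ((g.2 j : F) * y.1 i j) = y.1 i j :=
    congrFun (congrFun (congrArg Subtype.val hg) i) j
  exact Units.ext (mul_right_cancel₀ hij (by simpa [mul_assoc] using hfix))

theorem pow_dvd_index_stabilizer [Fintype F] (hsingle : ∀ i : V, {i} ∈ 𝓕)
    (y : GoodNonsimple F k 𝓕) :
    (Fintype.card F - 1) ^ (Fintype.card V + 1) ∣
      (MulAction.stabilizer ((V → Fˣ) × (Fin k → Fˣ)) y).index := by
  obtain ⟨i₀, j₀, hj₀, j₁, hj₁, hne⟩ :
      ∃ i₀ j₀, y.1 i₀ j₀ ≠ 0 ∧ ∃ j₁, y.1 i₀ j₁ ≠ 0 ∧ j₀ ≠ j₁ := by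
    simpa [IsSimple, Set.not_subsingleton_iff, Set.Nontrivial] using y.2.2
  set S := MulAction.stabilizer ((V → Fˣ) × (Fin k → Fˣ)) y
  have hrow (g : S) {i : V} {j : Fin k} (hij : y.1 i j ≠ 0) : g.1.1 i = (g.1.2 j)⁻¹ :=
    eq_inv_of_mul_eq_one_left (mul_eq_one_of_mem_stabilizer g.2 hij)
  have hcol (g : S) : g.1.2 j₁ = g.1.2 j₀ := inv_injective ((hrow g hj₁).symm.trans (hrow g hj₀))
  let φ : S →* ({j // j ≠ j₁} → Fˣ) :=
    { toFun g j := g.1.2 j, map_one' := rfl, map_mul' _ _ := rfl }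
  have hφ : Function.Injective φ := by
    intro g g' h
    have hd : g.1.2 = g'.1.2 := funext fun j ↦ by
      by_cases hj : j = j₁
      · rw [hj, hcol g, hcol g']
        exact congrFun h ⟨j₀, hne⟩
      · exact congrFun h ⟨j, hj⟩
    refine Subtype.ext (Prod.ext (funext fun i ↦ ?_) hd)
    obtain ⟨j, hj⟩ := Function.ne_iff.mp (y.2.1.ne_zero hsingle i)
    rw [hrow g hj, hrow g' hj, hd]
  refine S.dvd_index_of_injective φ hφ ?_
  have hk : k = k - 1 + 1 := by have := j₀.pos; omega
  simp only [Nat.card_eq_fintype_card, Fintype.card_prod, Fintype.card_fun, Fintype.card_units,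
    Fintype.card_fin, Fintype.card_subtype_compl, Fintype.card_unique]
  rw [hk, pow_add, pow_succ, Nat.add_sub_cancel]
  ring

theorem pow_dvd_card_goodNonsimple [Fintype F] (hsingle : ∀ i : V, {i} ∈ 𝓕) :
    (Fintype.card F - 1) ^ (Fintype.card V + 1) ∣ Nat.card (GoodNonsimple F k 𝓕) :=
  MulAction.dvd_card_of_forall_dvd_index_stabilizer (G := (V → Fˣ) × (Fin k → Fˣ))
    (pow_dvd_index_stabilizer hsingle)

lemma card_isGood_eq_add [Fintype F] (k : ℕ) (𝓕 : Finset (Finset V)) :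
    Nat.card {y : V → Fin k → F // IsGood 𝓕 y} =
      Nat.card {y : V → Fin k → F // IsGood 𝓕 y ∧ IsSimple y} +
        Nat.card (GoodNonsimple F k 𝓕) := by
  simp only [GoodNonsimple, Nat.card_eq_fintype_card, Fintype.card_subtype, ← filter_filter]
  exact (card_filter_add_card_filter_not _).symm

end TorusAction

/-- Let `q` be a prime power (i.e. the cardinality of a finite field
`F`), `Δ` a simplicial complex on `{1,…,ℓ}` containing every singleton, and `G` its
underlying graph.  Then for every `k ∈ ℕ`, `(q−1)^ℓ` divides `χ(S_Δ^q, q^k)` and the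
quotient is congruent to the number of proper `k`-colorings of `G` modulo `q−1`. -/
theorem stmt0 (ℓ : ℕ) (F : Type) [Field F] [Fintype F] (q : ℕ)
    (hq : Fintype.card F = q)
    (𝓕 : Finset (Finset (Fin ℓ)))
    (hdown : ∀ s ∈ 𝓕, ∀ t ⊆ s, t ∈ 𝓕)
    (hsingle : ∀ i : Fin ℓ, ({i} : Finset (Fin ℓ)) ∈ 𝓕)
    (G : SimpleGraph (Fin ℓ))
    (hG : ∀ i j : Fin ℓ, G.Adj i j ↔ i ≠ j ∧ ({i, j} : Finset (Fin ℓ)) ∈ 𝓕)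
    (k : ℕ) :
    ∃ m : ℤ,
      chi (SArr F 𝓕) ((q : ℤ) ^ k) = ((q : ℤ) - 1) ^ ℓ * m ∧
        m ≡ (nColorings G k : ℤ) [ZMOD ((q : ℤ) - 1)] := by
  subst hq
  obtain ⟨r, hr⟩ := pow_dvd_card_goodNonsimple (F := F) (k := k) hsingle
  have hq1 : ((Fintype.card F - 1 : ℕ) : ℤ) = Fintype.card F - 1 := by
    have := Fintype.card_pos (α := F)
    omega
  refine ⟨nColorings G k + (Fintype.card F - 1) * r, ?_, Int.modEq_iff_dvd.mpr ⟨-r, by ring⟩⟩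
  rw [chi_SArr_eq_card_isGood, card_isGood_eq_add, card_isGood_isSimple hG hdown hsingle, hr,
    Fintype.card_fin]
  push_cast [hq1]
  ring
end

section
/- Let G be a simple graph with perfect elimination ordering (v_1,…,v_ℓ). For k ∈ {1,…,ℓ} let C_{≥k} := {k} ∪ {i : there exist indices k < j_1 < j_2 < ⋯ < j_n < i (n ≥ 0) such that v_k v_{j_1} ⋯ v_{j_n} v_i is a path in G}. Suppose {v_i, v_j} is an edge of G with i < j, and suppose that for some k one has j ∈ C_{≥k} and i ∉ C_{≥k}. Then i < k and {v_i, v_k} is an edge of G (i.e., i ∈ E_{<k}). -/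
open Finset

/-- `ascReach G v k i` says that there is a path `v_k v_{j₁} ⋯ v_{j_n} v_i` in `G`
whose index sequence `k < j₁ < ⋯ < j_n < i` is strictly increasing. -/
def ascReach {ℓ : ℕ} (G : SimpleGraph (Fin ℓ)) (v : Equiv.Perm (Fin ℓ))
    (k i : Fin ℓ) : Prop :=
  ∃ n : ℕ, ∃ f : Fin (n + 2) → Fin ℓ,
    StrictMono f ∧ f 0 = k ∧ f (Fin.last (n + 1)) = i ∧
      ∀ m : Fin (n + 1), G.Adj (v (f m.castSucc)) (v (f m.succ))

/-- `C_{≥k}` is the set of indices `i` with `ReflTransGen (ascAdj G v) k i`. -/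
def ascAdj {ℓ : ℕ} (G : SimpleGraph (Fin ℓ)) (v : Equiv.Perm (Fin ℓ)) (a b : Fin ℓ) : Prop :=
  a < b ∧ G.Adj (v a) (v b)

section

variable {ℓ : ℕ} {G : SimpleGraph (Fin ℓ)} {v : Equiv.Perm (Fin ℓ)} {k i : Fin ℓ}

theorem ascReach_iff_exists_relSeries :
    ascReach G v k i ↔
      ∃ p : RelSeries {(a, b) | ascAdj G v a b}, p.length ≠ 0 ∧ p.head = k ∧ p.last = i := by
  constructor
  · rintro ⟨n, f, hf, rfl, rfl, hadj⟩
    exact ⟨⟨n + 1, f, fun m => ⟨hf m.castSucc_lt_succ, hadj m⟩⟩, n.succ_ne_zero, rfl, rfl⟩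
  · rintro ⟨⟨_ | n, f, step⟩, hlen, rfl, rfl⟩
    · exact absurd rfl hlen
    · exact ⟨n, f, Fin.strictMono_iff_lt_succ.2 fun m => (step m).1, rfl, rfl, fun m => (step m).2⟩

theorem eq_or_ascReach_iff_reflTransGen :
    (i = k ∨ ascReach G v k i) ↔ Relation.ReflTransGen (ascAdj G v) k i := by
  constructor
  · rintro (rfl | ⟨n, f, hf, rfl, rfl, hadj⟩)
    · exact .refl
    · exact Fin.induction (motive := fun m => Relation.ReflTransGen (ascAdj G v) (f 0) (f m))
        .refl (fun m hm => hm.tail ⟨hf m.castSucc_lt_succ, hadj m⟩) _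
  · intro h
    induction h with
    | refl => exact .inl rfl
    | @tail b c _ hbc ih =>
      refine .inr (ascReach_iff_exists_relSeries.2 ?_)
      obtain ⟨p, hp, rfl⟩ : ∃ p : RelSeries {(a, b) | ascAdj G v a b}, p.head = k ∧ p.last = b := by
        rcases ih with rfl | hkb
        · exact ⟨RelSeries.singleton _ b, rfl, rfl⟩
        · obtain ⟨p, -, hp⟩ := ascReach_iff_exists_relSeries.1 hkb
          exact ⟨p, hp⟩
      exact ⟨p.snoc c hbc, by simp, by simp [hp], by simp⟩

/-- If `b → c` is the last step of the path and `v_i v_c` an edge with `i < c`, the perfect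
elimination property at `c` makes `v_i v_b` an edge; `b < i` would put `i` into `C_{≥k}`, so
`i < b` and the argument recurses until `b = k`. -/
theorem lt_and_adj_of_reflTransGen_ascAdj
    (hPEO : ∀ k j l : Fin ℓ, j < k → l < k → j ≠ l →
      G.Adj (v j) (v k) → G.Adj (v l) (v k) → G.Adj (v j) (v l))
    {j : Fin ℓ} (hkj : Relation.ReflTransGen (ascAdj G v) k j) (hij : G.Adj (v i) (v j))
    (hlt : i < j) (hki : ¬Relation.ReflTransGen (ascAdj G v) k i) :
    i < k ∧ G.Adj (v i) (v k) := by
  induction hkj generalizing i with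
  | refl => exact ⟨hlt, hij⟩
  | @tail b c hkb hbc ih =>
    have hib : i ≠ b := by
      rintro rfl
      exact hki hkb
    have hadj : G.Adj (v i) (v b) := hPEO c i b hlt hbc.1 hib hij hbc.2
    rcases lt_or_gt_of_ne hib with hib | hbi
    · exact ih hadj hib hki
    · exact absurd (hkb.tail ⟨hbi, hadj.symm⟩) hki

end

/-- Let `(v_1,…,v_ℓ)` be a perfect elimination ordering of `G` and
`C_{≥k} = {k} ∪ {i : ascending path from v_k to v_i}`.  If `{v_i, v_j}` is an edge
with `i < j`, `j ∈ C_{≥k}` and `i ∉ C_{≥k}`, then `i < k` and `{v_i, v_k}` is an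
edge of `G` (i.e. `i ∈ E_{<k}`). -/
theorem stmt16 (ℓ : ℕ) (G : SimpleGraph (Fin ℓ)) (v : Equiv.Perm (Fin ℓ))
    (hPEO : ∀ k j l : Fin ℓ, j < k → l < k → j ≠ l →
      G.Adj (v j) (v k) → G.Adj (v l) (v k) → G.Adj (v j) (v l))
    (i j k : Fin ℓ) (hij : G.Adj (v i) (v j)) (hlt : i < j)
    (hjC : j = k ∨ ascReach G v k j)
    (hiC : ¬(i = k ∨ ascReach G v k i)) :
    i < k ∧ G.Adj (v i) (v k) := by
  rw [eq_or_ascReach_iff_reflTransGen] at hjC hiC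
  exact lt_and_adj_of_reflTransGen_ascAdj hPEO hjC hij hlt hiC
end
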